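/- Let G(z,z') = -(1/4π) ln(1 - cos θ cos θ' - sin θ sin θ' cos(φ-φ')) + (ln 2)/(4π) be the Green's function on S² and Γ(θ,φ,θ',φ') = -(1/4π) ln[(θ-θ')² + (φ-φ')² sin²θ]. Then the difference H := G - Γ extends to a function that is bounded on B_δ(z₀) × B_δ(z₀) for every point z₀ ∈ S² off the poles and sufficiently small δ > 0. -/
import Mathlib

open Real Set

/-- The Green's function of `-Δ` on `S²` in coordinates. -/
noncomputable def Gker (θ φ θ' φ' : ℝ) : ℝ :=
  -(1 / (4 * π)) * log (1 - cos θ * cos θ' - sin θ * sin θ' * cos (φ - φ')) + log 2 / (4 * π)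

/-- The flat logarithmic singular kernel in spherical coordinates. -/
noncomputable def Gam (θ φ θ' φ' : ℝ) : ℝ :=
  -(1 / (4 * π)) * log ((θ - θ') ^ 2 + (φ - φ') ^ 2 * sin θ ^ 2)

/-- `1 - cos x = 2 sin²(x/2)`. -/
lemma one_sub_cos_eq (x : ℝ) : 1 - Real.cos x = 2 * Real.sin (x / 2) ^ 2 := by
  have h : Real.cos x = Real.cos (2 * (x / 2)) := by ring_nf
  rw [h, Real.cos_two_mul']
  linarith [Real.sin_sq_add_cos_sq (x / 2)]

/-- Key identity. -/
lemma key_identity (θ θ' φ φ' : ℝ) :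
    1 - Real.cos θ * Real.cos θ' - Real.sin θ * Real.sin θ' * Real.cos (φ - φ') =
    2 * Real.sin ((θ - θ') / 2) ^ 2 +
      2 * Real.sin θ * Real.sin θ' * Real.sin ((φ - φ') / 2) ^ 2 := by
  have h1 := one_sub_cos_eq (θ - θ')
  have h2 := one_sub_cos_eq (φ - φ')
  have h3 := Real.cos_sub θ θ'
  linear_combination h1 + h3 + Real.sin θ * Real.sin θ' * h2

/-- Lower bound for `sin²` on `[-π/2, π/2]`: `(2/π)² x² ≤ sin² x`. -/
lemma sq_sin_ge (x : ℝ) (hx : |x| ≤ π / 2) : (2 / π) ^ 2 * x ^ 2 ≤ Real.sin x ^ 2 := by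
  have h := Real.mul_le_sin (x := |x|) (abs_nonneg x) hx
  have hs : Real.sin x ^ 2 = Real.sin |x| ^ 2 := by
    rcases abs_cases x with ⟨h1, _⟩ | ⟨h1, _⟩ <;> rw [h1] <;> simp [Real.sin_neg]
  have hp : (0 : ℝ) ≤ 2 / π * |x| := by positivity
  have h2 := mul_self_le_mul_self hp h
  calc (2 / π) ^ 2 * x ^ 2 = (2 / π * |x|) * (2 / π * |x|) := by
        rw [← sq_abs x]; ring
    _ ≤ Real.sin |x| * Real.sin |x| := h2
    _ = Real.sin x ^ 2 := by rw [hs]; ring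

set_option maxHeartbeats 1000000 in
theorem regular_part_bounded (θ₀ : ℝ) (hθ₀ : θ₀ ∈ Ioo (0 : ℝ) π) (φ₀ : ℝ) :
    ∃ δ > (0 : ℝ), ∃ C : ℝ, ∀ θ φ θ' φ' : ℝ,
      (θ - θ₀) ^ 2 + (φ - φ₀) ^ 2 < δ ^ 2 →
      (θ' - θ₀) ^ 2 + (φ' - φ₀) ^ 2 < δ ^ 2 →
      (θ, φ) ≠ (θ', φ') →
      |Gker θ φ θ' φ' - Gam θ φ θ' φ'| ≤ C := by
  obtain ⟨hθ₀0, hθ₀π⟩ := hθ₀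
  have hπ := Real.pi_pos
  set m := min θ₀ (π - θ₀) with hm
  have hm0 : 0 < m := lt_min hθ₀0 (by linarith)
  set δ : ℝ := min (m / 2) 1 with hδdef
  have hδ0 : 0 < δ := lt_min (by linarith) one_pos
  have hδ1 : δ ≤ 1 := min_le_right _ _
  have hδm : δ ≤ m / 2 := min_le_left _ _
  set s : ℝ := m / π with hs
  have hs0 : 0 < s := by positivity
  have hs1 : s ≤ 1 := by
    rw [hs, div_le_one hπ]
    calc m ≤ π - θ₀ := min_le_right _ _
      _ ≤ π := by linarith
  -- sin lower bound on the ball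
  have sinlb : ∀ θ : ℝ, |θ - θ₀| < δ → s ≤ Real.sin θ := by
    intro θ hθ
    obtain ⟨hl, hr⟩ := abs_lt.1 hθ
    have hmθ₀ : m ≤ θ₀ := min_le_left _ _
    have hmπθ₀ : m ≤ π - θ₀ := min_le_right _ _
    have h1 : m / 2 < θ := by linarith
    have h2 : θ < π - m / 2 := by linarith
    rcases le_or_gt θ (π / 2) with hcase | hcase
    · have hsin := Real.mul_le_sin (x := θ) (by linarith) hcase
      have hmul : 2 / π * (m / 2) ≤ 2 / π * θ :=
        mul_le_mul_of_nonneg_left (le_of_lt h1) (by positivity)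
      have : m / π = 2 / π * (m / 2) := by ring
      linarith
    · have hθ' : Real.sin θ = Real.sin (π - θ) := (Real.sin_pi_sub θ).symm
      have h3 : π - θ ≤ π / 2 := by linarith
      have h4 : 0 ≤ π - θ := by linarith
      have hsin := Real.mul_le_sin (x := π - θ) h4 h3
      have hmul : 2 / π * (m / 2) ≤ 2 / π * (π - θ) :=
        mul_le_mul_of_nonneg_left (by linarith) (by positivity)
      have : m / π = 2 / π * (m / 2) := by ring
      rw [hθ']
      linarith
  refine ⟨δ, hδ0, (1 / (4 * π)) * (|Real.log (4 * s ^ 2)| + |Real.log (π ^ 2 / s ^ 2)|),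
    fun θ φ θ' φ' h1 h2 hne => ?_⟩
  have hθb : |θ - θ₀| < δ :=
    abs_lt_of_sq_lt_sq (by linarith [sq_nonneg (φ - φ₀)]) (le_of_lt hδ0)
  have hφb : |φ - φ₀| < δ :=
    abs_lt_of_sq_lt_sq (by linarith [sq_nonneg (θ - θ₀)]) (le_of_lt hδ0)
  have hθ'b : |θ' - θ₀| < δ :=
    abs_lt_of_sq_lt_sq (by linarith [sq_nonneg (φ' - φ₀)]) (le_of_lt hδ0)
  have hφ'b : |φ' - φ₀| < δ :=
    abs_lt_of_sq_lt_sq (by linarith [sq_nonneg (θ' - θ₀)]) (le_of_lt hδ0)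
  have hsθ : s ≤ Real.sin θ := sinlb θ hθb
  have hsθ' : s ≤ Real.sin θ' := sinlb θ' hθ'b
  clear_value m δ s
  set u : ℝ := θ - θ' with hu
  set v : ℝ := φ - φ' with hv
  have huabs : |u| ≤ 2 := by
    obtain ⟨a1, a2⟩ := abs_lt.1 hθb
    obtain ⟨b1, b2⟩ := abs_lt.1 hθ'b
    rw [abs_le]; constructor <;> [skip; skip] <;> rw [hu] <;> linarith
  clear_value u v
  have hvabs : |v| ≤ 2 := by
    obtain ⟨a1, a2⟩ := abs_lt.1 hφb
    obtain ⟨b1, b2⟩ := abs_lt.1 hφ'b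
    rw [abs_le]; constructor <;> [skip; skip] <;> rw [hv] <;> linarith
  have hπ2 : (1 : ℝ) ≤ π / 2 := by linarith [Real.pi_gt_three]
  have huhalf : |u / 2| ≤ π / 2 := by
    rw [abs_div, abs_two]
    have : |u| / 2 ≤ 1 := by linarith
    linarith
  have hvhalf : |v / 2| ≤ π / 2 := by
    rw [abs_div, abs_two]
    have : |v| / 2 ≤ 1 := by linarith
    linarith
  -- E > 0
  have huv : u ≠ 0 ∨ v ≠ 0 := by
    by_contra h
    push_neg at h
    obtain ⟨h1', h2'⟩ := h
    apply hne
    rw [hu] at h1'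
    rw [hv] at h2'
    have e1 : θ = θ' := sub_eq_zero.1 h1'
    have e2 : φ = φ' := sub_eq_zero.1 h2'
    rw [e1, e2]
  set E : ℝ := u ^ 2 + v ^ 2 * Real.sin θ ^ 2 with hE
  clear_value E
  have hsinθ0 : 0 < Real.sin θ := lt_of_lt_of_le hs0 hsθ
  have hsinθ'0 : 0 < Real.sin θ' := lt_of_lt_of_le hs0 hsθ'
  have hsin1 : Real.sin θ ≤ 1 := Real.sin_le_one θ
  have hsin1' : Real.sin θ' ≤ 1 := Real.sin_le_one θ'
  have hE0 : 0 < E := by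
    rcases huv with h | h
    · have h' : 0 < u ^ 2 := by positivity
      have : 0 ≤ v ^ 2 * Real.sin θ ^ 2 := by positivity
      rw [hE]; linarith
    · have h' : 0 < v ^ 2 * Real.sin θ ^ 2 := by positivity
      have : 0 ≤ u ^ 2 := sq_nonneg u
      rw [hE]; linarith
  set D : ℝ := 1 - Real.cos θ * Real.cos θ' - Real.sin θ * Real.sin θ' * Real.cos (φ - φ') with hD
  clear_value D
  have hDeq : D = 2 * Real.sin (u / 2) ^ 2 +
      2 * Real.sin θ * Real.sin θ' * Real.sin (v / 2) ^ 2 := by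
    rw [hD, hu, hv]; exact key_identity θ θ' φ φ'
  -- auxiliary sin² bounds (multiplied through by π²)
  have a1 : u ^ 2 ≤ π ^ 2 * Real.sin (u / 2) ^ 2 := by
    have h := sq_sin_ge (u / 2) huhalf
    have heq : π ^ 2 * ((2 / π) ^ 2 * (u / 2) ^ 2) = u ^ 2 := by
      field_simp
    calc u ^ 2 = π ^ 2 * ((2 / π) ^ 2 * (u / 2) ^ 2) := heq.symm
      _ ≤ π ^ 2 * Real.sin (u / 2) ^ 2 := by
          apply mul_le_mul_of_nonneg_left h; positivity
  have a2 : v ^ 2 ≤ π ^ 2 * Real.sin (v / 2) ^ 2 := by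
    have h := sq_sin_ge (v / 2) hvhalf
    have heq : π ^ 2 * ((2 / π) ^ 2 * (v / 2) ^ 2) = v ^ 2 := by
      field_simp
    calc v ^ 2 = π ^ 2 * ((2 / π) ^ 2 * (v / 2) ^ 2) := heq.symm
      _ ≤ π ^ 2 * Real.sin (v / 2) ^ 2 := by
          apply mul_le_mul_of_nonneg_left h; positivity
  have hss' : s ^ 2 ≤ Real.sin θ * Real.sin θ' := by
    have h := mul_le_mul hsθ hsθ' (le_of_lt hs0) (le_of_lt hsinθ0)
    calc s ^ 2 = s * s := sq s
      _ ≤ Real.sin θ * Real.sin θ' := h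
  have hss1 : Real.sin θ * Real.sin θ' ≤ 1 := by
    have h := mul_le_mul hsin1 hsin1' (le_of_lt hsinθ'0) zero_le_one
    simpa using h
  have hs2 : s ^ 2 ≤ 1 := by
    calc s ^ 2 = s * s := sq s
      _ ≤ 1 * 1 := mul_le_mul hs1 hs1 hs0.le zero_le_one
      _ = 1 := one_mul 1
  have hsinθ2 : Real.sin θ ^ 2 ≤ 1 := Real.sin_sq_le_one θ
  -- lower bound for D : 2 s² E ≤ π² D
  have hDlb : 2 * s ^ 2 * E ≤ π ^ 2 * D := by
    rw [hDeq, hE]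
    have b1 : s ^ 2 * u ^ 2 ≤ u ^ 2 := by
      calc s ^ 2 * u ^ 2 ≤ 1 * u ^ 2 := mul_le_mul_of_nonneg_right hs2 (sq_nonneg u)
        _ = u ^ 2 := one_mul _
    have b2 : s ^ 2 * (v ^ 2 * Real.sin θ ^ 2) ≤ s ^ 2 * v ^ 2 := by
      apply mul_le_mul_of_nonneg_left _ (sq_nonneg s)
      calc v ^ 2 * Real.sin θ ^ 2 ≤ v ^ 2 * 1 :=
            mul_le_mul_of_nonneg_left hsinθ2 (sq_nonneg v)
        _ = v ^ 2 := mul_one _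
    have b3 : s ^ 2 * v ^ 2 ≤ (Real.sin θ * Real.sin θ') * v ^ 2 :=
      mul_le_mul_of_nonneg_right hss' (sq_nonneg v)
    have b4 : (Real.sin θ * Real.sin θ') * v ^ 2 ≤
        (Real.sin θ * Real.sin θ') * (π ^ 2 * Real.sin (v / 2) ^ 2) := by
      apply mul_le_mul_of_nonneg_left a2; positivity
    linarith [a1, b1, b2, b3, b4]
  -- upper bound for D : 2 s² D ≤ E
  have hDub : 2 * s ^ 2 * D ≤ E := by
    have c1 : Real.sin (u / 2) ^ 2 ≤ (u / 2) ^ 2 := Real.sin_sq_le_sq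
    have c2 : Real.sin (v / 2) ^ 2 ≤ (v / 2) ^ 2 := Real.sin_sq_le_sq
    have d1 : (Real.sin θ * Real.sin θ') * Real.sin (v / 2) ^ 2 ≤ (v / 2) ^ 2 := by
      calc (Real.sin θ * Real.sin θ') * Real.sin (v / 2) ^ 2
          ≤ 1 * Real.sin (v / 2) ^ 2 := by
            apply mul_le_mul_of_nonneg_right hss1 (sq_nonneg _)
        _ = Real.sin (v / 2) ^ 2 := one_mul _
        _ ≤ (v / 2) ^ 2 := c2
    have hD2 : D ≤ (u ^ 2 + v ^ 2) / 2 := by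
      rw [hDeq]
      have c1' : 2 * Real.sin (u / 2) ^ 2 ≤ u ^ 2 / 2 := by linarith [c1]
      have d1' : 2 * Real.sin θ * Real.sin θ' * Real.sin (v / 2) ^ 2 ≤ v ^ 2 / 2 := by
        linarith [d1]
      linarith
    have hElb : s ^ 2 * u ^ 2 + s ^ 2 * v ^ 2 ≤ E := by
      rw [hE]
      have e1 : s ^ 2 * u ^ 2 ≤ u ^ 2 := by
        calc s ^ 2 * u ^ 2 ≤ 1 * u ^ 2 := mul_le_mul_of_nonneg_right hs2 (sq_nonneg u)
          _ = u ^ 2 := one_mul _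
      have e2 : s ^ 2 * v ^ 2 ≤ v ^ 2 * Real.sin θ ^ 2 := by
        have hsq : s ^ 2 ≤ Real.sin θ ^ 2 := by
          calc s ^ 2 = s * s := sq s
            _ ≤ Real.sin θ * Real.sin θ := mul_le_mul hsθ hsθ hs0.le hsinθ0.le
            _ = Real.sin θ ^ 2 := (sq (Real.sin θ)).symm
        calc s ^ 2 * v ^ 2 ≤ Real.sin θ ^ 2 * v ^ 2 :=
              mul_le_mul_of_nonneg_right hsq (sq_nonneg v)
          _ = v ^ 2 * Real.sin θ ^ 2 := mul_comm _ _
      linarith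
    have hfin := mul_le_mul_of_nonneg_left hD2 (by positivity : (0:ℝ) ≤ 2 * s ^ 2)
    have heq2 : 2 * s ^ 2 * ((u ^ 2 + v ^ 2) / 2) = s ^ 2 * u ^ 2 + s ^ 2 * v ^ 2 := by ring
    linarith
  have hD0 : 0 < D := by
    by_contra h
    push_neg at h
    have h1' : π ^ 2 * D ≤ 0 := mul_nonpos_of_nonneg_of_nonpos (by positivity) h
    have h2' : 0 < 2 * s ^ 2 * E := by positivity
    linarith
  -- ratio bounds
  set R : ℝ := 2 * E / D with hR
  have hR0 : 0 < R := by positivity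
  have hRlb : 4 * s ^ 2 ≤ R := by
    rw [hR, le_div_iff₀ hD0]
    linarith [hDub]
  have hRub : R ≤ π ^ 2 / s ^ 2 := by
    rw [hR, div_le_div_iff₀ hD0 (by positivity : (0:ℝ) < s ^ 2)]
    linarith [hDlb]
  -- difference equals (1/(4π)) log R
  have hdiff : Gker θ φ θ' φ' - Gam θ φ θ' φ' = (1 / (4 * π)) * Real.log R := by
    unfold Gker Gam
    rw [← hD, ← hu, ← hv, ← hE, hR,
      show (2 : ℝ) * E / D = 2 * (E / D) by ring,
      Real.log_mul two_ne_zero (by positivity : E / D ≠ 0),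
      Real.log_div (ne_of_gt hE0) (ne_of_gt hD0)]
    field_simp
    ring
  rw [hdiff, abs_mul, abs_of_pos (by positivity : (0:ℝ) < 1 / (4 * π))]
  apply mul_le_mul_of_nonneg_left _ (by positivity : (0:ℝ) ≤ 1 / (4 * π))
  have llb : Real.log (4 * s ^ 2) ≤ Real.log R := Real.log_le_log (by positivity) hRlb
  have lub : Real.log R ≤ Real.log (π ^ 2 / s ^ 2) := Real.log_le_log hR0 hRub
  rw [abs_le]
  constructor
  · have h3 := neg_abs_le (Real.log (4 * s ^ 2))
    have h4 := abs_nonneg (Real.log (π ^ 2 / s ^ 2))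
    linarith
  · have h3 := le_abs_self (Real.log (π ^ 2 / s ^ 2))
    have h4 := abs_nonneg (Real.log (4 * s ^ 2))
    linarith
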